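/- With the quadratic symbol q₀₁ and the symbol c(ξ₁,ξ₂) := [(m − 2ξ₁ξ₂)q₀₁(ξ₁,ξ₂) − 2(ξ₂² + m)q₀₁(ξ₂,ξ₁)]/Δ(ξ₁,ξ₂), define c₀¹(ξ) := (i/m)g⁰¹_u − ((g¹¹_{uₜ} + 2g⁰¹_{uₓ})/(2m))ξ and c₁¹(ξ) := g¹¹_{uₜ}/4 + f_{uₜu}/(2m) − (i/m)g⁰¹_u ξ. Then there exists C > 0 such that for all real ξ₁, ξ₂ with ⟨ξ₁⟩ ≤ ⟨ξ₂⟩/20 one has |c(ξ₁,ξ₂) − c₀¹(ξ₁)ξ₂ − c₁¹(ξ₁)| ≤ C(1 + |ξ₁|³)/|ξ₂|, where ⟨ξ⟩ := (1 + ξ²)^{1/2}. -/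

import Mathlib

open Complex

/-- The quadratic symbol
`q₀₁(ξ₁,ξ₂) = f_{uₜu} + 2i g⁰¹_u ξ₁ − 2 g⁰¹_{uₓ} ξ₁ξ₂ − g¹¹_{uₜ} ξ₂²`. -/
noncomputable def q01 (futu g01u g01ux g11ut : ℝ) (ξ₁ ξ₂ : ℝ) : ℂ :=
  (futu : ℂ) + 2 * Complex.I * g01u * ξ₁ - 2 * g01ux * ξ₁ * ξ₂
    - (g11ut : ℂ) * (ξ₂ : ℂ)^2

/-- The denominator `Δ(ξ₁,ξ₂) = (m − 2ξ₁ξ₂)² − 4(ξ₁² + m)(ξ₂² + m)`. -/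
noncomputable def Δc (m ξ₁ ξ₂ : ℝ) : ℂ :=
  ((m : ℂ) - 2*ξ₁*ξ₂)^2 - 4*((ξ₁ : ℂ)^2 + m)*((ξ₂ : ℂ)^2 + m)

/-- The (non-symmetric) normal form symbol
`c(ξ₁,ξ₂) = [(m − 2ξ₁ξ₂)q₀₁(ξ₁,ξ₂) − 2(ξ₂² + m)q₀₁(ξ₂,ξ₁)]/Δ(ξ₁,ξ₂)`. -/
noncomputable def cSym (m futu g01u g01ux g11ut : ℝ) (ξ₁ ξ₂ : ℝ) : ℂ :=
  (((m : ℂ) - 2*ξ₁*ξ₂) * q01 futu g01u g01ux g11ut ξ₁ ξ₂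
    - 2*((ξ₂ : ℂ)^2 + m) * q01 futu g01u g01ux g11ut ξ₂ ξ₁) / Δc m ξ₁ ξ₂

/-- First low–high Taylor coefficient
`c₀¹(ξ) = (i/m)g⁰¹_u − ((g¹¹_{uₜ} + 2g⁰¹_{uₓ})/(2m))ξ`. -/
noncomputable def c01 (m g01u g01ux g11ut : ℝ) (ξ : ℝ) : ℂ :=
  Complex.I/m * g01u - ((g11ut : ℂ) + 2*g01ux)/(2*m) * ξ

/-- Second low–high Taylor coefficient
`c₁¹(ξ) = g¹¹_{uₜ}/4 + f_{uₜu}/(2m) − (i/m)g⁰¹_u ξ`. -/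
noncomputable def c11 (m futu g01u g11ut : ℝ) (ξ : ℝ) : ℂ :=
  (g11ut : ℂ)/4 + (futu : ℂ)/(2*m) - Complex.I/m * g01u * ξ


/-!
Subtracting the two leading terms leaves `(P(ξ₁) + Q(ξ₁) ξ₂) / Δ(ξ₁,ξ₂)` with cubics `P`, `Q` in
`ξ₁`: the coefficients `c₀¹`, `c₁¹` are exactly those that cancel the `ξ₂³` and `ξ₂²` terms of the
numerator. Since `Δ = −4m(ξ₁² + ξ₁ξ₂ + ξ₂²) − 3m²` and `ξ₁² + ξ₁ξ₂ + ξ₂² ≥ ξ₂²/2`, we have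
`|Δ| ≥ 2mξ₂²`, and `|ξ₂| ≥ 1` on the low–high region, so the quotient is `O((1 + |ξ₁|³)/|ξ₂|)`.
-/

lemma pow_le_one_add_pow {R : Type*} [Semiring R] [LinearOrder R] [IsStrictOrderedRing R]
    {t : R} (ht : 0 ≤ t) {k n : ℕ} (hkn : k ≤ n) : t ^ k ≤ 1 + t ^ n := by
  rcases le_total t 1 with h | h
  · exact (pow_le_one₀ ht h).trans (le_add_of_nonneg_right (pow_nonneg ht n))
  · exact (pow_le_pow_right₀ h hkn).trans (le_add_of_nonneg_left zero_le_one)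

lemma norm_cubic_le {𝕜 : Type*} [NormedField 𝕜] (a b c d x : 𝕜) :
    ‖a * x ^ 3 + b * x ^ 2 + c * x + d‖ ≤ (‖a‖ + ‖b‖ + ‖c‖ + ‖d‖) * (1 + ‖x‖ ^ 3) := by
  have hx := norm_nonneg x
  have h0 : (1 : ℝ) ≤ 1 + ‖x‖ ^ 3 := le_add_of_nonneg_right (by positivity)
  have h1 : ‖x‖ ≤ 1 + ‖x‖ ^ 3 := by simpa using pow_le_one_add_pow hx (by norm_num : 1 ≤ 3)
  have h2 : ‖x‖ ^ 2 ≤ 1 + ‖x‖ ^ 3 := pow_le_one_add_pow hx (by norm_num)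
  have h3 : ‖x‖ ^ 3 ≤ 1 + ‖x‖ ^ 3 := pow_le_one_add_pow hx le_rfl
  calc ‖a * x ^ 3 + b * x ^ 2 + c * x + d‖
      ≤ ‖a‖ * ‖x‖ ^ 3 + ‖b‖ * ‖x‖ ^ 2 + ‖c‖ * ‖x‖ + ‖d‖ := by
        have h := norm_add₄_le (a := a * x ^ 3) (b := b * x ^ 2) (c := c * x) (d := d)
        rwa [norm_mul, norm_mul, norm_mul, norm_pow, norm_pow] at h
    _ ≤ (‖a‖ + ‖b‖ + ‖c‖ + ‖d‖) * (1 + ‖x‖ ^ 3) := by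
        nlinarith [mul_le_mul_of_nonneg_left h3 (norm_nonneg a),
          mul_le_mul_of_nonneg_left h2 (norm_nonneg b),
          mul_le_mul_of_nonneg_left h1 (norm_nonneg c),
          mul_le_mul_of_nonneg_left h0 (norm_nonneg d)]

lemma norm_add_mul_div_le {𝕜 : Type*} [NormedField 𝕜] (P Q y D : 𝕜) {κ : ℝ} (hκ : 0 < κ)
    (hy : 1 ≤ ‖y‖) (hD : κ * ‖y‖ ^ 2 ≤ ‖D‖) :
    ‖(P + Q * y) / D‖ ≤ (‖P‖ + ‖Q‖) / κ / ‖y‖ := by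
  have hy0 : 0 < ‖y‖ := one_pos.trans_le hy
  have hnum : ‖P + Q * y‖ ≤ (‖P‖ + ‖Q‖) * ‖y‖ := by
    calc ‖P + Q * y‖ ≤ ‖P‖ + ‖Q‖ * ‖y‖ := by simpa only [norm_mul] using norm_add_le P (Q * y)
      _ ≤ (‖P‖ + ‖Q‖) * ‖y‖ := by nlinarith [norm_nonneg P, norm_nonneg Q]
  calc ‖(P + Q * y) / D‖ ≤ (‖P‖ + ‖Q‖) * ‖y‖ / (κ * ‖y‖ ^ 2) := by
        rw [norm_div]; exact div_le_div₀ (by positivity) hnum (by positivity) hD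
    _ = (‖P‖ + ‖Q‖) / κ / ‖y‖ := by field_simp

lemma Δc_eq (m ξ₁ ξ₂ : ℝ) :
    Δc m ξ₁ ξ₂ = ((-(4 * m * (ξ₁ ^ 2 + ξ₁ * ξ₂ + ξ₂ ^ 2) + 3 * m ^ 2) : ℝ) : ℂ) := by
  unfold Δc; push_cast; ring

lemma mul_sq_le_norm_Δc {m : ℝ} (hm : 0 ≤ m) (ξ₁ ξ₂ : ℝ) : 2 * m * ξ₂ ^ 2 ≤ ‖Δc m ξ₁ ξ₂‖ := by
  have hquad : ξ₂ ^ 2 / 2 ≤ ξ₁ ^ 2 + ξ₁ * ξ₂ + ξ₂ ^ 2 := by nlinarith [sq_nonneg (ξ₁ + ξ₂ / 2)]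
  have hnonneg : 0 ≤ 4 * m * (ξ₁ ^ 2 + ξ₁ * ξ₂ + ξ₂ ^ 2) + 3 * m ^ 2 := by
    nlinarith [mul_le_mul_of_nonneg_left hquad hm, sq_nonneg ξ₂]
  rw [Δc_eq, Complex.norm_real, norm_neg, Real.norm_of_nonneg hnonneg]
  nlinarith [mul_le_mul_of_nonneg_left hquad hm, sq_nonneg m]

lemma Δc_ne_zero {m : ℝ} (hm : 0 < m) (ξ₁ ξ₂ : ℝ) : Δc m ξ₁ ξ₂ ≠ 0 := by
  rw [Δc_eq, Complex.ofReal_ne_zero, neg_ne_zero]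
  nlinarith [mul_nonneg hm.le (add_nonneg (sq_nonneg (ξ₁ + ξ₂ / 2)) (sq_nonneg ξ₂))]

lemma cSym_sub_c01_sub_c11 {m : ℝ} (hm : 0 < m) (futu g01u g01ux g11ut ξ₁ ξ₂ : ℝ) :
    cSym m futu g01u g01ux g11ut ξ₁ ξ₂ - c01 m g01u g01ux g11ut ξ₁ * ξ₂
        - c11 m futu g01u g11ut ξ₁
      = ((-4 * I * g01u * (ξ₁ : ℂ) ^ 3 + (2 * futu + 3 * m * g11ut) * (ξ₁ : ℂ) ^ 2
            + (-I * m * g01u) * ξ₁ + (m * futu / 2 + 3 * m ^ 2 * g11ut / 4))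
          + (-(2 * g11ut + 4 * g01ux) * (ξ₁ : ℂ) ^ 3 + (-4 * I * g01u) * (ξ₁ : ℂ) ^ 2
            + (-m * (g11ut / 2 + g01ux)) * ξ₁ + (-I * m * g01u)) * ξ₂) / Δc m ξ₁ ξ₂ := by
  have hm' : (m : ℂ) ≠ 0 := Complex.ofReal_ne_zero.mpr hm.ne'
  have hΔ := Δc_ne_zero hm ξ₁ ξ₂
  rw [eq_div_iff hΔ, cSym, c01, c11]
  field_simp
  unfold q01 Δc
  ring

theorem cSym_low_high_expansion_general (m futu g01u g01ux g11ut : ℝ)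
    (hm : 0 < m) :
    ∃ C > 0, ∀ ξ₁ ξ₂ : ℝ,
      Real.sqrt (1 + ξ₁^2) ≤ Real.sqrt (1 + ξ₂^2) / 20 →
      ‖cSym m futu g01u g01ux g11ut ξ₁ ξ₂
          - c01 m g01u g01ux g11ut ξ₁ * ξ₂ - c11 m futu g01u g11ut ξ₁‖
        ≤ C * (1 + |ξ₁|^3) / |ξ₂| := by
  set KP : ℝ := ‖-4 * I * g01u‖ + ‖(2 * futu + 3 * m * g11ut : ℂ)‖ + ‖-I * m * g01u‖
    + ‖(m * futu / 2 + 3 * m ^ 2 * g11ut / 4 : ℂ)‖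
  set KQ : ℝ := ‖-(2 * g11ut + 4 * g01ux : ℂ)‖ + ‖-4 * I * g01u‖ + ‖-m * (g11ut / 2 + g01ux : ℂ)‖
    + ‖-I * m * g01u‖
  refine ⟨(KP + KQ) / (2 * m) + 1, by positivity, fun ξ₁ ξ₂ hξ => ?_⟩
  have hξ₂ : 1 ≤ |ξ₂| := by
    have h1 : 1 ≤ Real.sqrt (1 + ξ₁ ^ 2) := Real.one_le_sqrt.mpr (by nlinarith [sq_nonneg ξ₁])
    have h2 : 20 ≤ Real.sqrt (1 + ξ₂ ^ 2) := by linarith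
    rw [Real.le_sqrt (by norm_num) (by positivity)] at h2
    nlinarith [sq_abs ξ₂, abs_nonneg ξ₂]
  have hΔ : 2 * m * ‖(ξ₂ : ℂ)‖ ^ 2 ≤ ‖Δc m ξ₁ ξ₂‖ := by
    simpa only [Complex.norm_real, Real.norm_eq_abs, sq_abs] using mul_sq_le_norm_Δc hm.le ξ₁ ξ₂
  rw [cSym_sub_c01_sub_c11 hm]
  refine (norm_add_mul_div_le _ _ _ _ (by positivity) (by simpa using hξ₂) hΔ).trans ?_
  simp only [Complex.norm_real, Real.norm_eq_abs]
  gcongr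
  calc _ ≤ (KP + KQ) / (2 * m) * (1 + |ξ₁| ^ 3) := by
        rw [div_mul_eq_mul_div]
        gcongr
        refine (add_le_add (norm_cubic_le _ _ _ _ _) (norm_cubic_le _ _ _ _ _)).trans_eq ?_
        simp only [KP, KQ, Complex.norm_real, Real.norm_eq_abs]
        ring
    _ ≤ ((KP + KQ) / (2 * m) + 1) * (1 + |ξ₁| ^ 3) := by gcongr; linarith

/-- Low–high symbol expansion of the non-symmetric normal form correction `C`:
`|c(ξ₁,ξ₂) − c₀¹(ξ₁)ξ₂ − c₁¹(ξ₁)| ≤ C(1 + |ξ₁|³)/|ξ₂|` for `⟨ξ₁⟩ ≤ ⟨ξ₂⟩/20`. -/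
theorem cSym_low_high_expansion (m fuu futut futu g01u g01ut g01ux g11u g11ut g11ux : ℝ)
    (hm : 0 < m) :
    ∃ C > 0, ∀ ξ₁ ξ₂ : ℝ,
      Real.sqrt (1 + ξ₁^2) ≤ Real.sqrt (1 + ξ₂^2) / 20 →
      ‖cSym m futu g01u g01ux g11ut ξ₁ ξ₂
          - c01 m g01u g01ux g11ut ξ₁ * ξ₂ - c11 m futu g01u g11ut ξ₁‖
        ≤ C * (1 + |ξ₁|^3) / |ξ₂| :=
  cSym_low_high_expansion_general m futu g01u g01ux g11ut hm
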